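/- Suppose there exists a function φ: N → R such that Σ_{k=0}^∞ (2d/(2d+1))^{φ(k)} < ∞ and, for every x ∈ Z^d, Σ_{k=0}^∞ P_x( l_k(D^c) ≥ k - φ(k) ) < ∞. Then for every x ∈ Z^d, E_x[ Σ_{k=0}^∞ ∏_{z ∈ D} (2d/(2d+1))^{l_k(z)} ] < ∞; equivalently, the expected survival time of the killed random walk associated to D is finite for every starting point. -/

import Mathlib

/-!
Fix `k` and let `A_k` be the event that the walk spends at least `k - φ k` of its first `k` steps
outside `D`. The product `∏_{z ∈ D} (2d/(2d+1))^{l_k(z)}` equals `(2d/(2d+1))^{l_k(D)}`, so it is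
at most `1` on `A_k`, while off `A_k` we have `l_k(D) = k - l_k(Dᶜ) > φ k` and the product is at
most `(2d/(2d+1))^{φ k}`. Hence its expectation is at most `P(A_k) + (2d/(2d+1))^{φ k}`, and both
series converge by hypothesis.
-/
open MeasureTheory ProbabilityTheory
open scoped ENNReal

/-- The `j`-th unit step in `ℤ^d`: for `j < d` it is `+e_j`, and for `d ≤ j < 2d` it is
`-e_{j-d}`.  When `j` is uniform on `{0, …, 2d-1}`, this is a uniformly chosen nearest-neighbour
step. -/
def dirVec (d : ℕ) (j : ℕ) : Fin d → ℤ := fun i =>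
  if j < d then (if (i : ℕ) = j then 1 else 0) else (if (i : ℕ) + d = j then -1 else 0)

/-- The simple random walk on `ℤ^d` started at `x`, driven by the seed sequence `u`: at step `n`
it moves by `dirVec d (u n)`.  When the seeds are i.i.d. uniform on `{0, …, 2d-1}`, this is the
discrete-time simple random walk. -/
def srw (d : ℕ) (x : Fin d → ℤ) (u : ℕ → ℕ) : ℕ → Fin d → ℤ
  | 0 => x
  | n + 1 => srw d x u n + dirVec d (u n)

/-- The local time `l_k(z)`: the number of visits to `z` strictly before time `k`. -/
def locTime (d : ℕ) (x : Fin d → ℤ) (u : ℕ → ℕ) (k : ℕ) (z : Fin d → ℤ) : ℕ :=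
  ((Finset.range k).filter (fun j => srw d x u j = z)).card

open Classical in
/-- The product `∏_{z ∈ D} (2d/(2d+1))^{l_k(z)}`, valued in `[0,∞]`; since `l_k(z) = 0` for all
but finitely many `z`, it is the corresponding finite product over the sites of `D` visited
strictly before time `k`. -/
noncomputable def prodD (d : ℕ) (D : Set (Fin d → ℤ)) (x : Fin d → ℤ) (u : ℕ → ℕ)
    (k : ℕ) : ℝ≥0∞ :=
  ∏ z ∈ ((Finset.range k).image (fun j => srw d x u j)).filter (fun z => z ∈ D),
    (((2 * d : ℕ) : ℝ≥0∞) / ((2 * d + 1 : ℕ) : ℝ≥0∞)) ^ (locTime d x u k z)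

open Classical in
/-- The killed random walk associated to the set `D` of dissipative sites, started at `x` and
driven by the seed sequence `w`; `none` is the cemetery state.  From a site not in `D` it moves
by the uniform step `w n % (2d)`; from a site in `D`, with `r = w n % (2d+1)` it is killed if
`r = 2d` and otherwise moves by step `r`.  When the seeds are i.i.d. uniform on
`{0, …, 2d(2d+1) - 1}`, from a site in `D` the walk moves to each neighbour with probability
`1/(2d+1)` and is killed with probability `1/(2d+1)`, and from a site not in `D` it moves to each
neighbour with probability `1/(2d)`. -/
noncomputable def kwalk (d : ℕ) (D : Set (Fin d → ℤ)) (x : Fin d → ℤ) (w : ℕ → ℕ) :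
    ℕ → Option (Fin d → ℤ)
  | 0 => some x
  | n + 1 =>
    match kwalk d D x w n with
    | none => none
    | some y =>
      if y ∈ D then
        (if w n % (2 * d + 1) = 2 * d then none
         else some (y + dirVec d (w n % (2 * d + 1))))
      else some (y + dirVec d (w n % (2 * d)))

/-- The survival time `T̂` of the killed random walk: the step at which it is killed, as an
element of `[0,∞]` (it equals `∞` if the walk is never killed). -/
noncomputable def killTime (d : ℕ) (D : Set (Fin d → ℤ)) (x : Fin d → ℤ) (w : ℕ → ℕ) : ℝ≥0∞ :=
  sInf {t : ℝ≥0∞ | ∃ k : ℕ, t = (k : ℝ≥0∞) ∧ kwalk d D x w k = none}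

/-- The hitting (return) time `τ(D) = inf {k ≥ 1 : X_k ∈ D}` of the set `D` by the simple random
walk, as an element of `[0,∞]` (it equals `∞` if `D` is never hit at a positive time). -/
noncomputable def retTime (d : ℕ) (D : Set (Fin d → ℤ)) (x : Fin d → ℤ) (u : ℕ → ℕ) : ℝ≥0∞ :=
  sInf {t : ℝ≥0∞ | ∃ k : ℕ, t = (k : ℝ≥0∞) ∧ 1 ≤ k ∧ srw d x u k ∈ D}

open Finset

lemma measurable_srw {Ω : Type*} [MeasurableSpace Ω] {d : ℕ} {u : ℕ → Ω → ℕ}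
    (hu : ∀ n, Measurable (u n)) (x : Fin d → ℤ) (j : ℕ) :
    Measurable fun ω => srw d x (fun m => u m ω) j := by
  induction j with
  | zero => exact measurable_const
  | succ j ih => exact ih.add ((measurable_of_countable (dirVec d)).comp (hu j))

lemma measurable_card_filter_srw_mem {Ω : Type*} [MeasurableSpace Ω] {d : ℕ} {u : ℕ → Ω → ℕ}
    (hu : ∀ n, Measurable (u n)) (S : Set (Fin d → ℤ)) [DecidablePred (· ∈ S)]
    (x : Fin d → ℤ) (k : ℕ) :
    Measurable fun ω => #{j ∈ range k | srw d x (fun m => u m ω) j ∈ S} := by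
  simp only [card_filter]
  exact Finset.measurable_sum _ fun j _ =>
    Measurable.ite (measurable_srw hu x j S.to_countable.measurableSet)
      measurable_const measurable_const

lemma natCast_two_mul_div_eq_ofReal (d : ℕ) :
    ((2 * d : ℕ) : ℝ≥0∞) / ((2 * d + 1 : ℕ) : ℝ≥0∞) =
      ENNReal.ofReal ((2 * d : ℝ) / (2 * d + 1)) := by
  rw [ENNReal.ofReal_div_of_pos (by positivity)]
  norm_cast

lemma ofReal_pow_le_ofReal_rpow {ρ a : ℝ} (hρ0 : 0 < ρ) (hρ1 : ρ ≤ 1) {n : ℕ} (ha : a ≤ n) :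
    ENNReal.ofReal ρ ^ n ≤ ENNReal.ofReal (ρ ^ a) := by
  rw [← ENNReal.ofReal_pow hρ0.le, ← Real.rpow_natCast]
  exact ENNReal.ofReal_le_ofReal (Real.rpow_le_rpow_of_exponent_ge hρ0 hρ1 ha)

lemma lintegral_le_measure_add_of_le_one_of_forall_notMem {Ω : Type*} [MeasurableSpace Ω]
    (P : Measure Ω) [IsProbabilityMeasure P] {f : Ω → ℝ≥0∞} {s : Set Ω} (hs : MeasurableSet s)
    {c : ℝ≥0∞} (hf : ∀ ω, f ω ≤ 1) (hfc : ∀ ω ∉ s, f ω ≤ c) : ∫⁻ ω, f ω ∂P ≤ P s + c := by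
  have hle : ∀ ω, f ω ≤ s.indicator 1 ω + c := fun ω => by
    by_cases hω : ω ∈ s
    · simpa [hω] using (hf ω).trans le_self_add
    · simpa [hω] using hfc ω hω
  calc ∫⁻ ω, f ω ∂P ≤ ∫⁻ ω, s.indicator 1 ω + c ∂P := lintegral_mono hle
    _ = P s + c := by
      rw [lintegral_add_right _ measurable_const, lintegral_indicator_one hs, lintegral_const,
        measure_univ, mul_one]

section

open Classical

variable {d : ℕ} (D : Set (Fin d → ℤ)) (x : Fin d → ℤ)

lemma prodD_eq_pow (u : ℕ → ℕ) (k : ℕ) :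
    prodD d D x u k = (((2 * d : ℕ) : ℝ≥0∞) / ((2 * d + 1 : ℕ) : ℝ≥0∞)) ^
      #{j ∈ range k | srw d x u j ∈ D} := by
  rw [prodD, prod_pow_eq_pow_sum, card_eq_sum_card_fiberwise (f := srw d x u)
    (t := ((range k).image (srw d x u)).filter (· ∈ D))]
  · refine congrArg _ (sum_congr rfl fun z hz => ?_)
    rw [locTime, filter_filter]
    exact congrArg card
      (filter_congr fun j _ => ⟨fun h => ⟨h ▸ (mem_filter.1 hz).2, h⟩, And.right⟩)
  · intro j hj
    obtain ⟨hjk, hjD⟩ := mem_filter.1 hj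
    exact mem_filter.2 ⟨mem_image_of_mem _ hjk, hjD⟩

lemma prodD_le_one (u : ℕ → ℕ) (k : ℕ) : prodD d D x u k ≤ 1 := by
  rw [prodD_eq_pow]
  exact pow_le_one' (ENNReal.div_le_of_le_mul (by simp)) _

lemma prodD_le_ofReal_rpow (hd : 1 ≤ d) (u : ℕ → ℕ) {k : ℕ} {a : ℝ}
    (h : (#{j ∈ range k | srw d x u j ∈ Dᶜ} : ℝ) < k - a) :
    prodD d D x u k ≤ ENNReal.ofReal (((2 * d : ℝ) / (2 * d + 1)) ^ a) := by
  have hd' : (1 : ℝ) ≤ d := by exact_mod_cast hd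
  rw [prodD_eq_pow, natCast_two_mul_div_eq_ofReal]
  refine ofReal_pow_le_ofReal_rpow (by positivity)
    (div_le_one_of_le₀ (by linarith) (by positivity)) ?_
  have hsplit := card_filter_add_card_filter_not (s := range k) (fun j => srw d x u j ∈ D)
  rw [card_range] at hsplit
  simp only [Set.mem_compl_iff] at h
  have : ((#{j ∈ range k | srw d x u j ∈ D} : ℕ) : ℝ) + #{j ∈ range k | srw d x u j ∉ D} = k :=
    mod_cast hsplit
  linarith

lemma measurable_prodD {Ω : Type*} [MeasurableSpace Ω] {u : ℕ → Ω → ℕ}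
    (hu : ∀ n, Measurable (u n)) (k : ℕ) :
    Measurable fun ω => prodD d D x (fun m => u m ω) k := by
  simp only [prodD_eq_pow]
  exact measurable_const.pow (measurable_card_filter_srw_mem hu D x k)

lemma lintegral_prodD_le (hd : 1 ≤ d) {Ω : Type*} [MeasurableSpace Ω] (P : Measure Ω)
    [IsProbabilityMeasure P] {u : ℕ → Ω → ℕ} (hu : ∀ n, Measurable (u n)) (k : ℕ) (a : ℝ) :
    ∫⁻ ω, prodD d D x (fun m => u m ω) k ∂P ≤
      P {ω | (k : ℝ) - a ≤ (#{j ∈ range k | srw d x (fun m => u m ω) j ∈ Dᶜ} : ℝ)} +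
        ENNReal.ofReal (((2 * d : ℝ) / (2 * d + 1)) ^ a) := by
  refine lintegral_le_measure_add_of_le_one_of_forall_notMem P ?_ (fun ω => prodD_le_one D x _ k)
    (fun ω hω => prodD_le_ofReal_rpow D x hd _ (not_le.1 hω))
  exact measurableSet_le measurable_const
    ((measurable_from_nat (f := ((↑) : ℕ → ℝ))).comp (measurable_card_filter_srw_mem hu Dᶜ x k))

end

open Classical in
/-- Suppose there exists `φ : ℕ → ℝ` such that `Σ_k (2d/(2d+1))^{φ(k)} < ∞` and,
for every `x ∈ ℤ^d`, `Σ_k P_x(l_k(Dᶜ) ≥ k - φ(k)) < ∞`.  Then for every `x ∈ ℤ^d`,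
`E_x[ Σ_{k=0}^∞ ∏_{z ∈ D} (2d/(2d+1))^{l_k(z)} ] < ∞`.  The simple random walk is encoded by
i.i.d. uniform seeds `U` on `(Ω, P)`. -/
theorem local_time_product_sum_finite_of_compl_local_time_condition (d : ℕ) (hd : 1 ≤ d)
    (D : Set (Fin d → ℤ)) (φ : ℕ → ℝ)
    (hφ : Summable fun k : ℕ => ((2 * d : ℝ) / (2 * d + 1)) ^ (φ k)) :
    ∀ (Ω : Type) (_ : MeasurableSpace Ω) (P : Measure Ω), IsProbabilityMeasure P →
      ∀ U : ℕ → Ω → Fin (2 * d),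
        (∀ n, Measurable (U n)) →
        iIndepFun U P →
        (∀ n j, P {ω | U n ω = j} = ((2 * d : ℕ) : ℝ≥0∞)⁻¹) →
        (∀ x : Fin d → ℤ,
          (∑' k : ℕ, P {ω | (k : ℝ) - φ k ≤
              (((Finset.range k).filter
                (fun j => srw d x (fun m => (U m ω : ℕ)) j ∈ Dᶜ)).card : ℝ)}) < ⊤) →
        ∀ x : Fin d → ℤ,
          (∫⁻ ω, (∑' k : ℕ, prodD d D x (fun m => (U m ω : ℕ)) k) ∂P) < ⊤ := by
  intro Ω _ P _ U hU _ _ hsum x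
  have hu : ∀ n, Measurable fun ω => (U n ω : ℕ) :=
    fun n => (measurable_of_countable _).comp (hU n)
  rw [lintegral_tsum fun k => (measurable_prodD D x hu k).aemeasurable]
  refine (ENNReal.tsum_le_tsum fun k => lintegral_prodD_le D x hd P hu k (φ k)).trans_lt ?_
  rw [ENNReal.tsum_add, ← ENNReal.ofReal_tsum_of_nonneg (fun k => by positivity) hφ]
  exact ENNReal.add_lt_top.2 ⟨hsum x, ENNReal.ofReal_lt_top⟩
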